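/- If f : A → B is a flat ring morphism, then B[{f(M_i)B / f(a_i)}_{i∈I}] ≅ B ⊗_A A[{M_i/a_i}_{i∈I}] canonically as B-algebras. -/

import Mathlib

open scoped TensorProduct

noncomputable section

variable {A : Type*} [CommRing A] {I : Type*}

/-- The multiplicative submonoid generated by the elements `a_i` of the multi-center. -/
def dilSubmonoid (a : I → A) : Submonoid A := Submonoid.closure (Set.range a)

lemma a_mem_dilSubmonoid (a : I → A) (i : I) : a i ∈ dilSubmonoid a :=
  Submonoid.subset_closure ⟨i, rfl⟩

/-- `a^ν` for `ν ∈ ⊕_{i∈I} ℕ`. -/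
def apow (a : I → A) (ν : I →₀ ℕ) : A := ν.prod fun i n => a i ^ n

lemma apow_mem (a : I → A) (ν : I →₀ ℕ) : apow a ν ∈ dilSubmonoid a :=
  Submonoid.prod_mem _ fun i _ => pow_mem (a_mem_dilSubmonoid a i) _

/-- The product ideal `L^ν = ∏_i (M_i + (a_i))^{ν_i}`. -/
def Lpow (M : I → Ideal A) (a : I → A) (ν : I →₀ ℕ) : Ideal A :=
  ν.prod fun i n => (M i + Ideal.span {a i}) ^ n

/-- The fraction `m / a_i` in the localization at the submonoid generated by the `a_i`. -/
def dilFrac (a : I → A) (i : I) (m : A) : Localization (dilSubmonoid a) :=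
  Localization.mk m ⟨a i, a_mem_dilSubmonoid a i⟩

/-- The multi-centered dilatation `A[{M_i/a_i}]`, realized as the sub-`A`-algebra of the
localization `S⁻¹A` generated by the fractions `m / a_i` with `m ∈ M_i`. -/
def dilatation (M : I → Ideal A) (a : I → A) :
    Subalgebra A (Localization (dilSubmonoid a)) :=
  Algebra.adjoin A (⋃ i, dilFrac a i '' (M i))

/-- The canonical map between localizations induced by the ring morphism `algebraMap A B`. -/
def locMapBase (a : I → A) (B : Type*) [CommRing B] [Algebra A B] :
    Localization (dilSubmonoid a) →+*
      Localization (dilSubmonoid fun i => algebraMap A B (a i)) :=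
  IsLocalization.map (M := dilSubmonoid a)
    (T := dilSubmonoid fun i => algebraMap A B (a i))
    (Localization (dilSubmonoid fun i => algebraMap A B (a i))) (algebraMap A B)
    (Submonoid.closure_le.mpr (by
      rintro x ⟨i, rfl⟩
      exact a_mem_dilSubmonoid (fun i => algebraMap A B (a i)) i))

/-! Write `S` for the submonoid generated by the `a_i` and `f = algebraMap A B`.
Localization commutes with base change, so `B ⊗[A] S⁻¹A ≅ (f S)⁻¹B`, and flatness of `B` keeps
`B ⊗[A] A[{M_i/a_i}] → B ⊗[A] S⁻¹A` injective. Its image is the `B`-subalgebra generated by the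
fractions `f m / f a_i` with `m ∈ M_i`; since `f(M_i)B` is the `B`-span of `f(M_i)` and
`n ↦ n / f a_i` is `B`-linear, this is the dilatation `B[{f(M_i)B / f(a_i)}]`. -/

theorem Algebra.TensorProduct.range_lift_ofId_comp_adjoin_val {R S B L : Type*} [CommSemiring R]
    [CommSemiring B] [Algebra R B] [Semiring S] [Algebra R S] [CommSemiring L] [Algebra R L]
    [Algebra B L] [IsScalarTower R B L] (g : S →ₐ[R] L) (s : Set S) :
    (lift (Algebra.ofId B L) (g.comp (Algebra.adjoin R s).val)
      fun _ _ => .all _ _).range = Algebra.adjoin B (g '' s) := by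
  apply le_antisymm
  · rintro _ ⟨z, rfl⟩
    change lift _ _ _ z ∈ _
    induction z using TensorProduct.induction_on with
    | zero => simp
    | tmul b d =>
      rw [lift_tmul]
      refine mul_mem (Subalgebra.algebraMap_mem _ b) ?_
      have hd : g d ∈ Algebra.adjoin R (g '' s) := by
        rw [← AlgHom.map_adjoin]
        exact ⟨d, d.2, rfl⟩
      rw [← Algebra.adjoin_adjoin_of_tower R]
      exact Algebra.subset_adjoin hd
    | add x y hx hy => rw [map_add]; exact add_mem hx hy
  · refine Algebra.adjoin_le ?_
    rintro _ ⟨x, hx, rfl⟩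
    exact ⟨1 ⊗ₜ ⟨x, Algebra.subset_adjoin hx⟩, by simp⟩

theorem dilFrac_image_span (a : I → A) (i : I) (s : Set A) :
    dilFrac a i '' (Ideal.span s : Set A) = Submodule.span A (dilFrac a i '' s) := by
  have h : dilFrac a i = LinearMap.toSpanSingleton A _ (dilFrac a i 1) := by
    ext m
    simp [dilFrac, Localization.smul_mk]
  rw [h, ← Submodule.map_span]
  rfl

section BaseChange

variable (a : I → A) (B : Type*) [CommRing B] [Algebra A B]

theorem locMapBase_dilFrac (i : I) (m : A) :
    locMapBase a B (dilFrac a i m)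
      = dilFrac (fun i => algebraMap A B (a i)) i (algebraMap A B m) := by
  rw [locMapBase, dilFrac, dilFrac, Localization.mk_eq_mk', Localization.mk_eq_mk']
  exact IsLocalization.map_mk' _ _ _

theorem locMapBase_comp_algebraMap :
    (locMapBase a B).comp (algebraMap A (Localization (dilSubmonoid a)))
      = (algebraMap B _).comp (algebraMap A B) :=
  IsLocalization.map_comp _

theorem dilatation_map_eq_adjoin_image_locMapBase (M : I → Ideal A) :
    (dilatation (fun i => (M i).map (algebraMap A B)) fun i => algebraMap A B (a i))
      = Algebra.adjoin B (locMapBase a B '' ⋃ i, dilFrac a i '' M i) := by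
  simp only [Set.image_iUnion, Set.image_image, locMapBase_dilFrac]
  refine le_antisymm (Algebra.adjoin_le <| Set.iUnion_subset fun i => ?_) <|
    Algebra.adjoin_mono <| Set.iUnion_mono fun i => ?_
  · have hmap : (M i).map (algebraMap A B) = Ideal.span (algebraMap A B '' M i) := rfl
    dsimp only
    rw [hmap, dilFrac_image_span, Set.image_image]
    intro x hx
    exact Algebra.span_le_adjoin B _
      (Submodule.span_mono (Set.subset_iUnion_of_subset i subset_rfl) hx)
  · rintro _ ⟨m, hm, rfl⟩
    exact ⟨_, Ideal.mem_map_of_mem _ hm, rfl⟩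

abbrev locMapBaseAlgebra : Algebra (Localization (dilSubmonoid a))
    (Localization (dilSubmonoid fun i => algebraMap A B (a i))) :=
  (locMapBase a B).toAlgebra

attribute [local instance] locMapBaseAlgebra

theorem isScalarTower_locMapBase : IsScalarTower A (Localization (dilSubmonoid a))
    (Localization (dilSubmonoid fun i => algebraMap A B (a i))) :=
  IsScalarTower.of_algebraMap_eq' <|
    (IsScalarTower.algebraMap_eq A B _).trans (locMapBase_comp_algebraMap a B).symm

attribute [local instance] isScalarTower_locMapBase

theorem algebraMapSubmonoid_dilSubmonoid :
    Algebra.algebraMapSubmonoid B (dilSubmonoid a)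
      = dilSubmonoid fun i => algebraMap A B (a i) := by
  rw [Algebra.algebraMapSubmonoid, dilSubmonoid, MonoidHom.map_mclosure, ← Set.range_comp]
  rfl

theorem isPushout_locMapBase : Algebra.IsPushout A B (Localization (dilSubmonoid a))
    (Localization (dilSubmonoid fun i => algebraMap A B (a i))) := by
  have : IsLocalization (Algebra.algebraMapSubmonoid B (dilSubmonoid a))
      (Localization (dilSubmonoid fun i => algebraMap A B (a i))) := by
    rw [algebraMapSubmonoid_dilSubmonoid]
    exact Localization.isLocalization
  exact Algebra.isPushout_of_isLocalization (dilSubmonoid a) (Localization (dilSubmonoid a)) B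
    (Localization (dilSubmonoid fun i => algebraMap A B (a i)))

attribute [local instance] isPushout_locMapBase

variable (M : I → Ideal A)

def dilatationBaseChangeHom : (B ⊗[A] dilatation M a) →ₐ[B]
    Localization (dilSubmonoid fun i => algebraMap A B (a i)) :=
  Algebra.TensorProduct.lift (Algebra.ofId B _)
    ((IsScalarTower.toAlgHom A (Localization (dilSubmonoid a)) _).comp (dilatation M a).val)
    fun _ _ => .all _ _

theorem dilatationBaseChangeHom_tmul (b : B) (x : dilatation M a) :
    dilatationBaseChangeHom a B M (b ⊗ₜ x) = algebraMap B _ b * locMapBase a B x :=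
  rfl

theorem dilatationBaseChangeHom_eq_comp :
    dilatationBaseChangeHom a B M = (Algebra.IsPushout.equiv A B _ _).toAlgHom.comp
      (Algebra.TensorProduct.lTensor B (dilatation M a).val) :=
  Algebra.TensorProduct.ext' fun b x => (Algebra.IsPushout.equiv_tmul A B _ _ b x.1).symm

theorem dilatationBaseChangeHom_injective [Module.Flat A B] :
    Function.Injective (dilatationBaseChangeHom a B M) := by
  rw [dilatationBaseChangeHom_eq_comp]
  exact (Algebra.IsPushout.equiv A B _ _).injective.comp <|
    Module.Flat.lTensor_preserves_injective_linearMap (dilatation M a).val.toLinearMap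
      Subtype.val_injective

theorem dilatationBaseChangeHom_range :
    (dilatationBaseChangeHom a B M).range
      = dilatation (fun i => (M i).map (algebraMap A B)) fun i => algebraMap A B (a i) :=
  (Algebra.TensorProduct.range_lift_ofId_comp_adjoin_val _ _).trans
    (dilatation_map_eq_adjoin_image_locMapBase a B M).symm

end BaseChange

/-- if `f : A → B` is flat then base change commutes with dilatation:
`B[{f(M_i)B / f(a_i)}] ≅ B ⊗_A A[{M_i/a_i}]` canonically as `B`-algebras. -/
theorem stmt14 {B : Type*} [CommRing B] [Algebra A B] [Module.Flat A B]
    (M : I → Ideal A) (a : I → A) :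
    ∃ e : (B ⊗[A] ↥(dilatation M a)) ≃ₐ[B]
        ↥(dilatation (fun i => (M i).map (algebraMap A B))
            (fun i => algebraMap A B (a i))),
      ∀ x : ↥(dilatation M a),
        ((e (1 ⊗ₜ[A] x) :
            Localization (dilSubmonoid fun i => algebraMap A B (a i))))
          = locMapBase a B ((x : Localization (dilSubmonoid a))) := by
  refine ⟨(AlgEquiv.ofInjective _ (dilatationBaseChangeHom_injective a B M)).trans
    (Subalgebra.equivOfEq _ _ (dilatationBaseChangeHom_range a B M)), fun x => ?_⟩
  change dilatationBaseChangeHom a B M (1 ⊗ₜ x) = _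
  rw [dilatationBaseChangeHom_tmul, map_one, one_mul]
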